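/- The algebra A_G(f,t) over a commutative group G is solvable of index m if and only if for all a₁,…,a_{2^m} ∈ G, the product ∏_{k=0}^{m−1} ∏_{s=0}^{2^{m−k−1}−1} f( t^{2^k−1} ∘ ∏_{q=1}^{2^k} a_{2^{k+1}s+q}, t^{2^k−1} ∘ ∏_{l=1}^{2^k} a_{2^{k+1}s+2^k+l} ) equals 0. -/

import Mathlib

/-!
`L^[k]` is spanned by the products of `2^k` basis vectors `e_{a₁}, …, e_{a_{2^k}}` bracketed
as a complete binary tree: `L^[0]` is spanned by the basis and the multiplication is bilinear,
so `L^[k+1]` is spanned by products of two such trees. By `e_a e_b = f(a,b) e_{a∘b∘t}` a tree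
product is a multiple of a single basis vector, and unfolding the tree level by level shows
that the multiple is the product in the statement: level `k` contributes one factor `f` for
each of the `2^{m-k-1}` pairs of adjacent subtrees of depth `k`. Hence `L^[m] = 0` iff all
these products vanish.
-/

open Finsupp

/-- Multiplication of the algebra `A_G(f,t)`: `e_a e_b = f(a,b) e_{a∘b∘t}`. -/
noncomputable def mulG {K G : Type*} [Field K] [CommGroup G] (f : G → G → K) (t : G)
    (x y : G →₀ K) : G →₀ K :=
  x.sum fun a xa => y.sum fun b yb => Finsupp.single (a * b * t) (xa * yb * f a b)

/-- The derived series `L^[k]` of `A_G(f,t)`. -/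
noncomputable def derG {K G : Type*} [Field K] [CommGroup G] (f : G → G → K) (t : G) :
    ℕ → Submodule K (G →₀ K)
  | 0 => ⊤
  | k + 1 =>
    Submodule.span K
      {z : G →₀ K | ∃ x ∈ derG f t k, ∃ y ∈ derG f t k, z = mulG f t x y}

theorem Finset.prod_Icc_one_add {M : Type*} [CommMonoid M] (a : ℕ → M) (n p : ℕ) :
    ∏ i ∈ Finset.Icc 1 (n + p), a i =
      (∏ i ∈ Finset.Icc 1 n, a i) * ∏ i ∈ Finset.Icc 1 p, a (n + i) := by
  induction p with
  | zero => simp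
  | succ p ih =>
    rw [← add_assoc, Finset.prod_Icc_succ_top (by omega), ih, Finset.prod_Icc_succ_top (by omega),
      mul_assoc, add_assoc]

section

variable {K G : Type*} [Field K] [CommGroup G] (f : G → G → K) (t : G)

theorem mulG_single (a b : G) (α β : K) :
    mulG f t (single a α) (single b β) = single (a * b * t) (α * β * f a b) := by
  simp [mulG]

noncomputable def mulGₗ : (G →₀ K) →ₗ[K] (G →₀ K) →ₗ[K] G →₀ K :=
  LinearMap.mk₂ K (mulG f t)
    (fun x x' y => by
      simp only [mulG]
      exact sum_add_index' (by simp) fun a α β => by simp only [add_mul, single_add, sum_add])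
    (fun c x y => by
      simp only [mulG]
      rw [sum_smul_index (by simp), smul_sum]
      simp only [smul_sum, smul_single', mul_assoc])
    (fun x y y' => by
      simp only [mulG, ← sum_add]
      refine sum_congr fun a _ => sum_add_index' (by simp) fun b β γ => by
        simp only [mul_add, add_mul, single_add])
    (fun c x y => by
      simp only [mulG, smul_sum]
      refine sum_congr fun a _ => ?_
      rw [sum_smul_index (by simp)]
      refine sum_congr fun b _ => ?_
      rw [smul_single']
      ring_nf)

theorem mulGₗ_apply (x y : G →₀ K) : mulGₗ f t x y = mulG f t x y := rfl

theorem derG_succ (k : ℕ) :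
    derG f t (k + 1) = Submodule.map₂ (mulGₗ f t) (derG f t k) (derG f t k) := by
  rw [Submodule.map₂_eq_span_image2, derG]
  congr 1
  ext z
  simp [Set.mem_image2, mulGₗ_apply, eq_comm]

noncomputable def treeMul : ℕ → (ℕ → G) → G →₀ K
  | 0, a => single (a 1) 1
  | k + 1, a => mulG f t (treeMul k a) (treeMul k fun i => a (2 ^ k + i))

theorem treeMul_congr (k : ℕ) {a b : ℕ → G} (h : ∀ i ∈ Finset.Icc 1 (2 ^ k), a i = b i) :
    treeMul f t k a = treeMul f t k b := by
  induction k generalizing a b with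
  | zero => simp [treeMul, h 1 (by simp)]
  | succ k ih =>
    simp only [Finset.mem_Icc, pow_succ] at h
    rw [treeMul, treeMul, ih fun i hi => h i (by rw [Finset.mem_Icc] at hi; omega),
      ih fun i hi => h (2 ^ k + i) (by rw [Finset.mem_Icc] at hi; omega)]

theorem range_treeMul_succ (k : ℕ) :
    Set.range (treeMul f t (k + 1)) =
      Set.image2 (mulG f t) (Set.range (treeMul f t k)) (Set.range (treeMul f t k)) := by
  refine subset_antisymm ?_ ?_
  · rintro _ ⟨a, rfl⟩
    exact ⟨_, ⟨a, rfl⟩, _, ⟨fun i => a (2 ^ k + i), rfl⟩, rfl⟩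
  · rintro _ ⟨_, ⟨a, rfl⟩, _, ⟨b, rfl⟩, rfl⟩
    -- concatenate `a₁, …, a_{2^k}` and `b₁, …, b_{2^k}`
    refine ⟨fun i => if i ≤ 2 ^ k then a i else b (i - 2 ^ k), ?_⟩
    rw [treeMul]
    congr 1 <;> refine treeMul_congr f t k fun i hi => ?_
    · simp_all
    · simp only [Finset.mem_Icc] at hi
      simp [show ¬2 ^ k + i ≤ 2 ^ k by omega]

theorem derG_eq_span_range_treeMul (k : ℕ) :
    derG f t k = Submodule.span K (Set.range (treeMul f t k)) := by
  induction k with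
  | zero =>
    have : Set.range (treeMul f t 0) = Set.range fun g : G => single g (1 : K) :=
      subset_antisymm (fun _ ⟨a, h⟩ => ⟨a 1, h⟩) fun _ ⟨g, h⟩ => ⟨fun _ => g, h⟩
    rw [derG, this, ← (Finsupp.basisSingleOne (R := K)).span_eq]
    rfl
  | succ k ih =>
    rw [derG_succ, ih, Submodule.map₂_span_span, range_treeMul_succ]
    rfl

def treeIndex (k : ℕ) (a : ℕ → G) : G :=
  t ^ (2 ^ k - 1) * ∏ q ∈ Finset.Icc 1 (2 ^ k), a q

def treeCoeff (m : ℕ) (a : ℕ → G) : K :=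
  ∏ k ∈ Finset.range m, ∏ s ∈ Finset.range (2 ^ (m - k - 1)),
    f (treeIndex t k fun q => a (2 ^ (k + 1) * s + q))
      (treeIndex t k fun l => a (2 ^ (k + 1) * s + 2 ^ k + l))

theorem treeIndex_succ (k : ℕ) (a : ℕ → G) :
    treeIndex t (k + 1) a = treeIndex t k a * treeIndex t k (fun i => a (2 ^ k + i)) * t := by
  have h : 2 ^ (k + 1) - 1 = (2 ^ k - 1) + (2 ^ k - 1) + 1 := by
    have := Nat.one_le_two_pow (n := k); rw [pow_succ]; omega
  rw [treeIndex, treeIndex, treeIndex, pow_succ, mul_two, Finset.prod_Icc_one_add, ← mul_two,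
    ← pow_succ, h, pow_succ, pow_add]
  ac_rfl

theorem treeCoeff_succ (k : ℕ) (a : ℕ → G) :
    treeCoeff f t (k + 1) a = treeCoeff f t k a * treeCoeff f t k (fun i => a (2 ^ k + i)) *
      f (treeIndex t k a) (treeIndex t k fun i => a (2 ^ k + i)) := by
  rw [treeCoeff, Finset.prod_range_succ, show k + 1 - k - 1 = 0 by omega, pow_zero,
    Finset.prod_range_one, treeCoeff, treeCoeff, ← Finset.prod_mul_distrib]
  simp only [mul_zero, zero_add]
  congr 1
  refine Finset.prod_congr rfl fun j hj => ?_
  have hj : j < k := Finset.mem_range.mp hj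
  -- the `2^(k-j)` pairs at level `j` split into those inside `a₁, …, a_{2^k}` and the rest
  have hsplit : 2 ^ (k + 1 - j - 1) = 2 ^ (k - j - 1) + 2 ^ (k - j - 1) := by
    rw [show k + 1 - j - 1 = k - j - 1 + 1 by omega, pow_succ, mul_two]
  have hshift (s : ℕ) : 2 ^ (j + 1) * (2 ^ (k - j - 1) + s) = 2 ^ k + 2 ^ (j + 1) * s := by
    rw [mul_add, ← pow_add, show j + 1 + (k - j - 1) = k by omega]
  rw [hsplit, Finset.prod_range_add]
  simp only [hshift, add_assoc]

theorem treeMul_eq_single (k : ℕ) (a : ℕ → G) :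
    treeMul f t k a = single (treeIndex t k a) (treeCoeff f t k a) := by
  induction k generalizing a with
  | zero => simp [treeMul, treeIndex, treeCoeff]
  | succ k ih => rw [treeMul, ih, ih, mulG_single, treeIndex_succ, treeCoeff_succ]

end

theorem stmt4_general {K G : Type*} [Field K] [CommGroup G] (f : G → G → K) (t : G)
    (m : ℕ) :
    derG f t m = ⊥ ↔
      ∀ a : ℕ → G,
        (∏ k ∈ Finset.range m, ∏ s ∈ Finset.range (2 ^ (m - k - 1)),
            f (t ^ (2 ^ k - 1) * ∏ q ∈ Finset.Icc 1 (2 ^ k), a (2 ^ (k + 1) * s + q))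
              (t ^ (2 ^ k - 1) *
                ∏ l ∈ Finset.Icc 1 (2 ^ k), a (2 ^ (k + 1) * s + 2 ^ k + l))) = 0 := by
  rw [derG_eq_span_range_treeMul, Submodule.span_eq_bot]
  simp only [Set.forall_mem_range, treeMul_eq_single, single_eq_zero]
  rfl

/-- `A_G(f,t)` is solvable of index `m` (i.e. `L^[m] = 0`) iff the
product (F1) vanishes for all `a₁, …, a_{2^m} ∈ G`. -/
theorem stmt4 {K G : Type*} [Field K] [CommGroup G] (f : G → G → K) (t : G)
    (m : ℕ) (hm : 1 ≤ m) :
    derG f t m = ⊥ ↔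
      ∀ a : ℕ → G,
        (∏ k ∈ Finset.range m, ∏ s ∈ Finset.range (2 ^ (m - k - 1)),
            f (t ^ (2 ^ k - 1) * ∏ q ∈ Finset.Icc 1 (2 ^ k), a (2 ^ (k + 1) * s + q))
              (t ^ (2 ^ k - 1) *
                ∏ l ∈ Finset.Icc 1 (2 ^ k), a (2 ^ (k + 1) * s + 2 ^ k + l))) = 0 :=
  stmt4_general f t m
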